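/- arXiv:2502.04610 — 4 statements merged into one kernel-verified Lean document; each statement's English description precedes it below -/
import Mathlib

section
/- Let (x_n) be a bounded sequence of real numbers and H_n = ∑_{k=1}^n 1/k. Then liminf_{n→∞} (1/n) ∑_{k=1}^n x_k ≤ liminf_{n→∞} (1/H_n) ∑_{k=1}^n x_k/k ≤ limsup_{n→∞} (1/H_n) ∑_{k=1}^n x_k/k ≤ limsup_{n→∞} (1/n) ∑_{k=1}^n x_k. -/
/-!
Summation by parts writes `∑_{k ≤ n} x_k / k = c_n + ∑_{k < n} c_k / (k + 1)`, where `c_n` is the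
`n`-th Cesàro mean. So, up to the term `c_n / H_n → 0`, the logarithmic average is a weighted mean
of the Cesàro means with nonnegative weights `1 / (k + 1)` whose total `H_n` diverges, and such a
mean cannot eventually exceed any bound that the means `c_k` eventually satisfy. This gives the
upper inequality; the lower one is the upper one for `-x`.
-/

open Filter

/-- The `n`-th harmonic number `H_n = ∑_{k=1}^n 1/k` as a real number. -/
noncomputable def H (n : ℕ) : ℝ := ∑ k ∈ Finset.range n, (1 : ℝ) / (k + 1)

open Finset Topology

theorem Real.limsup_neg {ι : Type*} (u : ι → ℝ) (l : Filter ι) :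
    limsup (fun i => -u i) l = -liminf u l := by
  rw [limsup_eq, liminf_eq, Real.sInf_def]
  congr 2
  ext a
  simp [neg_le_neg_iff]

theorem Finset.sum_Icc_one_eq_sum_range {M : Type*} [AddCommMonoid M] (f : ℕ → M) (n : ℕ) :
    ∑ k ∈ Icc 1 n, f k = ∑ k ∈ range n, f (k + 1) := by
  rw [range_eq_Ico, sum_Ico_add', zero_add, Ico_add_one_right_eq_Icc]

noncomputable def weightedMean (w u : ℕ → ℝ) (n : ℕ) : ℝ :=
  (∑ k ∈ range n, w k * u k) / ∑ k ∈ range n, w k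

section WeightedMean

variable {w u : ℕ → ℝ}

theorem weightedMean_neg :
    weightedMean w (fun k => -u k) = fun n => -weightedMean w u n := by
  funext n
  simp only [weightedMean, mul_neg, sum_neg_distrib, neg_div]

theorem eventually_weightedMean_le (hw : ∀ k, 0 ≤ w k)
    (hW : Tendsto (fun n => ∑ k ∈ range n, w k) atTop atTop) {b ε : ℝ} (hε : 0 < ε)
    (hu : ∀ᶠ k in atTop, u k ≤ b) :
    ∀ᶠ n in atTop, weightedMean w u n ≤ b + ε := by
  obtain ⟨N, hN⟩ := eventually_atTop.1 hu
  set c := ∑ k ∈ range N, w k * (u k - b)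
  have hsum : ∀ n ≥ N, ∑ k ∈ range n, w k * u k ≤ b * ∑ k ∈ range n, w k + c := by
    intro n hn
    have htail : ∑ k ∈ Ico N n, w k * (u k - b) ≤ 0 :=
      sum_nonpos fun k hk => mul_nonpos_of_nonneg_of_nonpos (hw k)
        (sub_nonpos.2 (hN k (mem_Ico.1 hk).1))
    have hsplit : ∑ k ∈ range n, w k * (u k - b) = c + ∑ k ∈ Ico N n, w k * (u k - b) :=
      (sum_range_add_sum_Ico _ hn).symm
    have hexpand : ∑ k ∈ range n, w k * (u k - b) =
        ∑ k ∈ range n, w k * u k - b * ∑ k ∈ range n, w k := by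
      simp only [mul_sub, sum_sub_distrib, mul_comm (w _) b, ← mul_sum]
    linarith
  filter_upwards [eventually_ge_atTop N, hW.eventually_gt_atTop 0,
    hW.eventually_ge_atTop (c / ε)] with n hn hpos hlarge
  rw [weightedMean, div_le_iff₀ hpos]
  rw [div_le_iff₀ hε] at hlarge
  linarith [hsum n hn]

theorem isBoundedUnder_le_weightedMean (hw : ∀ k, 0 ≤ w k)
    (hW : Tendsto (fun n => ∑ k ∈ range n, w k) atTop atTop)
    (hu : IsBoundedUnder (· ≤ ·) atTop u) :
    IsBoundedUnder (· ≤ ·) atTop (weightedMean w u) := by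
  obtain ⟨b, hb⟩ := hu.eventually_le
  exact isBoundedUnder_of_eventually_le (eventually_weightedMean_le hw hW one_pos hb)

theorem isBoundedUnder_ge_weightedMean (hw : ∀ k, 0 ≤ w k)
    (hW : Tendsto (fun n => ∑ k ∈ range n, w k) atTop atTop)
    (hu : IsBoundedUnder (· ≥ ·) atTop u) :
    IsBoundedUnder (· ≥ ·) atTop (weightedMean w u) := by
  rw [← isBoundedUnder_le_neg] at hu ⊢
  simpa only [weightedMean_neg] using isBoundedUnder_le_weightedMean hw hW hu

theorem limsup_weightedMean_le (hw : ∀ k, 0 ≤ w k)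
    (hW : Tendsto (fun n => ∑ k ∈ range n, w k) atTop atTop)
    (hu_le : IsBoundedUnder (· ≤ ·) atTop u) (hu_ge : IsBoundedUnder (· ≥ ·) atTop u) :
    limsup (weightedMean w u) atTop ≤ limsup u atTop := by
  refine le_of_forall_pos_le_add fun ε hε => ?_
  have hu : ∀ᶠ k in atTop, u k ≤ limsup u atTop + ε / 2 :=
    (eventually_lt_of_limsup_lt (by linarith) hu_le).mono fun _ => le_of_lt
  calc limsup (weightedMean w u) atTop ≤ limsup u atTop + ε / 2 + ε / 2 :=
        limsup_le_of_le (isBoundedUnder_ge_weightedMean hw hW hu_ge).isCoboundedUnder_le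
          (eventually_weightedMean_le hw hW (half_pos hε) hu)
    _ = limsup u atTop + ε := by ring

end WeightedMean

noncomputable def cesaroMean (x : ℕ → ℝ) (n : ℕ) : ℝ := (1 / (n : ℝ)) * ∑ k ∈ Icc 1 n, x k

noncomputable def logMean (x : ℕ → ℝ) (n : ℕ) : ℝ := (1 / H n) * ∑ k ∈ Icc 1 n, x k / (k : ℝ)

theorem cesaroMean_neg (x : ℕ → ℝ) : cesaroMean (fun k => -x k) = fun n => -cesaroMean x n := by
  funext n
  simp only [cesaroMean, sum_neg_distrib, mul_neg]

theorem logMean_neg (x : ℕ → ℝ) : logMean (fun k => -x k) = fun n => -logMean x n := by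
  funext n
  simp only [logMean, neg_div, sum_neg_distrib, mul_neg]

theorem tendsto_H_atTop : Tendsto H atTop atTop :=
  Real.tendsto_sum_range_one_div_nat_succ_atTop

theorem cesaroMean_eq_weightedMean (x : ℕ → ℝ) :
    cesaroMean x = weightedMean 1 (fun k => x (k + 1)) := by
  funext n
  simp [cesaroMean, weightedMean, sum_Icc_one_eq_sum_range, div_eq_inv_mul]

theorem logMean_eq_weightedMean (x : ℕ → ℝ) :
    logMean x = weightedMean (fun k => 1 / ((k : ℝ) + 1)) (fun k => x (k + 1)) := by
  funext n
  simp [logMean, weightedMean, sum_Icc_one_eq_sum_range, div_eq_inv_mul, H]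

theorem natCast_mul_cesaroMean (x : ℕ → ℝ) (n : ℕ) :
    n * cesaroMean x n = ∑ k ∈ Icc 1 n, x k := by
  rcases n.eq_zero_or_pos with rfl | hn
  · simp
  · rw [cesaroMean, ← mul_assoc, mul_one_div_cancel (by positivity), one_mul]

-- Summation by parts; the `k = 0` term on the right is `cesaroMean x 0 / 1 = 0`.
theorem sum_Icc_div_eq_cesaroMean_add (x : ℕ → ℝ) (n : ℕ) :
    ∑ k ∈ Icc 1 n, x k / (k : ℝ) = cesaroMean x n + ∑ k ∈ range n, cesaroMean x k / (k + 1) := by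
  induction n with
  | zero => simp [cesaroMean]
  | succ n ih =>
    have hsucc := natCast_mul_cesaroMean x (n + 1)
    rw [sum_Icc_succ_top (by omega), ← natCast_mul_cesaroMean] at hsucc
    rw [sum_Icc_succ_top (by omega), ih, sum_range_succ]
    push_cast at hsucc ⊢
    field_simp
    linear_combination -hsucc

theorem logMean_eq_weightedMean_cesaroMean_add (x : ℕ → ℝ) :
    logMean x = weightedMean (fun k => 1 / ((k : ℝ) + 1)) (cesaroMean x) +
      fun n => cesaroMean x n / H n := by
  funext n
  have hH : ∑ k ∈ range n, 1 / ((k : ℝ) + 1) = H n := rfl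
  simp only [logMean, sum_Icc_div_eq_cesaroMean_add, weightedMean, Pi.add_apply, hH,
    one_div_mul_eq_div]
  rw [add_div, add_comm]

theorem isBoundedUnder_le_cesaroMean {x : ℕ → ℝ} (hx : IsBoundedUnder (· ≤ ·) atTop x) :
    IsBoundedUnder (· ≤ ·) atTop (cesaroMean x) := by
  rw [cesaroMean_eq_weightedMean]
  exact isBoundedUnder_le_weightedMean (fun _ => zero_le_one)
    (by simpa using tendsto_natCast_atTop_atTop) ((tendsto_add_atTop_nat 1).isBoundedUnder_comp hx)

theorem isBoundedUnder_ge_cesaroMean {x : ℕ → ℝ} (hx : IsBoundedUnder (· ≥ ·) atTop x) :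
    IsBoundedUnder (· ≥ ·) atTop (cesaroMean x) := by
  rw [← isBoundedUnder_le_neg] at hx ⊢
  simpa only [cesaroMean_neg] using isBoundedUnder_le_cesaroMean hx

theorem isBoundedUnder_le_logMean {x : ℕ → ℝ} (hx : IsBoundedUnder (· ≤ ·) atTop x) :
    IsBoundedUnder (· ≤ ·) atTop (logMean x) := by
  rw [logMean_eq_weightedMean]
  exact isBoundedUnder_le_weightedMean (fun _ => by positivity) tendsto_H_atTop
    ((tendsto_add_atTop_nat 1).isBoundedUnder_comp hx)

theorem isBoundedUnder_ge_logMean {x : ℕ → ℝ} (hx : IsBoundedUnder (· ≥ ·) atTop x) :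
    IsBoundedUnder (· ≥ ·) atTop (logMean x) := by
  rw [← isBoundedUnder_le_neg] at hx ⊢
  simpa only [logMean_neg] using isBoundedUnder_le_logMean hx

theorem tendsto_cesaroMean_div_H {x : ℕ → ℝ}
    (hx_le : IsBoundedUnder (· ≤ ·) atTop x) (hx_ge : IsBoundedUnder (· ≥ ·) atTop x) :
    Tendsto (fun n => cesaroMean x n / H n) atTop (𝓝 0) := by
  have hc : IsBoundedUnder (· ≤ ·) atTop (norm ∘ cesaroMean x) := by
    simpa only [Function.comp_def, Real.norm_eq_abs, isBoundedUnder_le_abs] using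
      ⟨isBoundedUnder_le_cesaroMean hx_le, isBoundedUnder_ge_cesaroMean hx_ge⟩
  simpa only [div_eq_mul_inv, Pi.inv_apply] using
    isBoundedUnder_le_mul_tendsto_zero hc tendsto_H_atTop.inv_tendsto_atTop

theorem limsup_logMean_le_limsup_cesaroMean {x : ℕ → ℝ}
    (hx_le : IsBoundedUnder (· ≤ ·) atTop x) (hx_ge : IsBoundedUnder (· ≥ ·) atTop x) :
    limsup (logMean x) atTop ≤ limsup (cesaroMean x) atTop := by
  set w : ℕ → ℝ := fun k => 1 / ((k : ℝ) + 1)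
  have hw : ∀ k, 0 ≤ w k := fun k => by positivity
  have hc_le := isBoundedUnder_le_cesaroMean hx_le
  have hc_ge := isBoundedUnder_ge_cesaroMean hx_ge
  have hr := tendsto_cesaroMean_div_H hx_le hx_ge
  rw [logMean_eq_weightedMean_cesaroMean_add]
  calc limsup (weightedMean w (cesaroMean x) + fun n => cesaroMean x n / H n) atTop
      ≤ limsup (weightedMean w (cesaroMean x)) atTop +
          limsup (fun n => cesaroMean x n / H n) atTop :=
        limsup_add_le (isBoundedUnder_ge_weightedMean hw tendsto_H_atTop hc_ge)
          (isBoundedUnder_le_weightedMean hw tendsto_H_atTop hc_le)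
          hr.isCoboundedUnder_le hr.isBoundedUnder_le
    _ = limsup (weightedMean w (cesaroMean x)) atTop := by rw [hr.limsup_eq, add_zero]
    _ ≤ limsup (cesaroMean x) atTop := limsup_weightedMean_le hw tendsto_H_atTop hc_le hc_ge

/-- For a bounded real sequence `(x_n)`, the harmonic (logarithmic) averages are squeezed
between the lower and upper Cesàro averages:
`liminf (1/n) ∑_{k=1}^n x_k ≤ liminf (1/H_n) ∑_{k=1}^n x_k/k
  ≤ limsup (1/H_n) ∑_{k=1}^n x_k/k ≤ limsup (1/n) ∑_{k=1}^n x_k`. -/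
theorem liminf_cesaro_le_liminf_log_le_limsup_log_le_limsup_cesaro
    (x : ℕ → ℝ) (hx : ∃ C : ℝ, ∀ n : ℕ, |x n| ≤ C) :
    liminf (fun n : ℕ => (1 / (n : ℝ)) * ∑ k ∈ Finset.Icc 1 n, x k) atTop ≤
      liminf (fun n : ℕ => (1 / H n) * ∑ k ∈ Finset.Icc 1 n, x k / (k : ℝ)) atTop ∧
    liminf (fun n : ℕ => (1 / H n) * ∑ k ∈ Finset.Icc 1 n, x k / (k : ℝ)) atTop ≤
      limsup (fun n : ℕ => (1 / H n) * ∑ k ∈ Finset.Icc 1 n, x k / (k : ℝ)) atTop ∧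
    limsup (fun n : ℕ => (1 / H n) * ∑ k ∈ Finset.Icc 1 n, x k / (k : ℝ)) atTop ≤
      limsup (fun n : ℕ => (1 / (n : ℝ)) * ∑ k ∈ Finset.Icc 1 n, x k) atTop := by
  obtain ⟨C, hC⟩ := hx
  obtain ⟨hx_le, hx_ge⟩ := isBoundedUnder_le_abs.1 (isBoundedUnder_of ⟨C, hC⟩)
  change liminf (cesaroMean x) atTop ≤ liminf (logMean x) atTop ∧
    liminf (logMean x) atTop ≤ limsup (logMean x) atTop ∧
    limsup (logMean x) atTop ≤ limsup (cesaroMean x) atTop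
  refine ⟨?_, liminf_le_limsup (isBoundedUnder_le_logMean hx_le) (isBoundedUnder_ge_logMean hx_ge),
    limsup_logMean_le_limsup_cesaroMean hx_le hx_ge⟩
  have h := limsup_logMean_le_limsup_cesaroMean (x := fun k => -x k)
    (isBoundedUnder_le_neg.2 hx_ge) (isBoundedUnder_ge_neg.2 hx_le)
  rwa [logMean_neg, cesaroMean_neg, Real.limsup_neg, Real.limsup_neg, neg_le_neg_iff] at h
end

section
/- Let (X,T) be a topological dynamical system. If (x_m) is a sequence of points of X, (n_m) is a strictly increasing sequence of positive integers, and μ ∈ M(X) satisfies μ = lim_{m→∞} (1/H_{n_m}) ∑_{k=1}^{n_m} (1/k) δ_{T^{k-1}x_m} in the weak* topology, then μ is T-invariant. -/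
open Filter MeasureTheory Topology
open scoped NNReal ENNReal

/-- A Borel probability measure `μ` is `T`-invariant if `μ(T⁻¹B) = μ(B)` for every Borel set. -/
def IsInvariantMeasure {X : Type*} [MetricSpace X] [MeasurableSpace X]
    (T : X → X) (μ : ProbabilityMeasure X) : Prop :=
  ∀ B : Set X, MeasurableSet B → μ (T ⁻¹' B) = μ B

/-- Key summation bound: the logarithmic-average difference is uniformly bounded. -/
lemma log_avg_diff_bound (b : ℕ → ℝ) (C : ℝ) (hC0 : 0 ≤ C) (hC : ∀ k, |b k| ≤ C) (N : ℕ) :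
    |∑ k ∈ Finset.range N, (1 / (k + 1 : ℝ)) * (b (k + 1) - b k)| ≤ 3 * C := by
  have hsplit : ∀ k : ℕ, (1 / (k + 1 : ℝ)) * (b (k + 1) - b k) =
      (b (k + 1) / (k + 2) - b k / (k + 1)) +
        b (k + 1) * (1 / (k + 1 : ℝ) - 1 / (k + 2 : ℝ)) := by
    intro k
    have h1 : (k + 1 : ℝ) ≠ 0 := by positivity
    have h2 : (k + 2 : ℝ) ≠ 0 := by positivity
    field_simp
    ring
  calc |∑ k ∈ Finset.range N, (1 / (k + 1 : ℝ)) * (b (k + 1) - b k)|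
      = |(∑ k ∈ Finset.range N, (b (k + 1) / (k + 2) - b k / (k + 1))) +
          ∑ k ∈ Finset.range N, b (k + 1) * (1 / (k + 1 : ℝ) - 1 / (k + 2 : ℝ))| := by
        rw [← Finset.sum_add_distrib]
        congr 1
        exact Finset.sum_congr rfl fun k _ => hsplit k
    _ ≤ |∑ k ∈ Finset.range N, (b (k + 1) / (k + 2) - b k / (k + 1))| +
          |∑ k ∈ Finset.range N, b (k + 1) * (1 / (k + 1 : ℝ) - 1 / (k + 2 : ℝ))| :=
        abs_add_le _ _
    _ ≤ 2 * C + C := by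
        gcongr
        · -- telescoping first sum
          have : ∑ k ∈ Finset.range N, (b (k + 1) / ((k : ℝ) + 1 + 1) - b k / (k + 1)) =
              b N / (N + 1) - b 0 / 1 := by
            have := Finset.sum_range_sub (fun k : ℕ => b k / (k + 1)) N
            simpa using this
          have h2 : ∀ k : ℕ, ((k : ℝ) + 2) = ((k : ℝ) + 1 + 1) := fun k => by ring
          simp_rw [h2]
          rw [this]
          have hN : |b N / ((N : ℝ) + 1)| ≤ C := by
            rw [abs_div]
            have h1 : (1 : ℝ) ≤ |(N : ℝ) + 1| := by
              rw [abs_of_pos (by positivity)]; simp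
            calc |b N| / |(N : ℝ) + 1| ≤ |b N| / 1 := by
                  apply div_le_div_of_nonneg_left (abs_nonneg _) one_pos h1
              _ ≤ C := by simpa using hC N
          calc |b N / ((N : ℝ) + 1) - b 0 / 1| ≤ |b N / ((N : ℝ) + 1)| + |b 0 / 1| :=
                abs_sub _ _
            _ ≤ C + C := by
                apply add_le_add hN
                simpa using hC 0
            _ = 2 * C := by ring
        · -- second sum bounded by C
          have hd : ∀ k : ℕ, (0 : ℝ) ≤ 1 / (k + 1 : ℝ) - 1 / (k + 2 : ℝ) := by
            intro k
            have h1 : (0 : ℝ) < (k : ℝ) + 1 := by positivity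
            have h2 : (0 : ℝ) < (k : ℝ) + 2 := by positivity
            rw [sub_nonneg]
            apply one_div_le_one_div_of_le h1 (by linarith)
          calc |∑ k ∈ Finset.range N, b (k + 1) * (1 / (k + 1 : ℝ) - 1 / (k + 2 : ℝ))|
              ≤ ∑ k ∈ Finset.range N, |b (k + 1) * (1 / (k + 1 : ℝ) - 1 / (k + 2 : ℝ))| :=
                Finset.abs_sum_le_sum_abs _ _
            _ ≤ ∑ k ∈ Finset.range N, C * (1 / (k + 1 : ℝ) - 1 / (k + 2 : ℝ)) := by
                apply Finset.sum_le_sum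
                intro k _
                rw [abs_mul, abs_of_nonneg (hd k)]
                exact mul_le_mul_of_nonneg_right (hC _) (hd k)
            _ = C * ∑ k ∈ Finset.range N, (1 / (k + 1 : ℝ) - 1 / (k + 2 : ℝ)) := by
                rw [Finset.mul_sum]
            _ ≤ C * 1 := by
                apply mul_le_mul_of_nonneg_left _ hC0
                have h2 : ∀ k : ℕ, ((k : ℝ) + 2) = ((k : ℝ) + 1 + 1) := fun k => by ring
                simp_rw [h2]
                have t := Finset.sum_range_sub' (fun k : ℕ => 1 / ((k : ℝ) + 1)) N
                push_cast at t
                rw [t]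
                have hpos : (0 : ℝ) ≤ 1 / ((N : ℝ) + 1) := by positivity
                norm_num
                linarith
            _ = C := mul_one C
    _ = 3 * C := by ring

/-- If `(x_m)` is a sequence of points of `X`, `(n_m)` is a strictly increasing sequence of
positive integers, and `μ` is the weak* limit of the logarithmic empirical measures
`(1/H_{n_m}) ∑_{k=1}^{n_m} (1/k) δ_{T^{k-1} x_m}`, then `μ` is `T`-invariant. -/
theorem invariant_of_log_empirical_limit
    {X : Type*} [MetricSpace X] [CompactSpace X] [Nonempty X]
    [MeasurableSpace X] [BorelSpace X]
    (T : X → X) (hT : Continuous T)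
    (x : ℕ → X) (n : ℕ → ℕ) (hn : StrictMono n) (hn' : ∀ m, 0 < n m)
    (μ : ProbabilityMeasure X)
    (hconv : ∀ f : C(X, ℝ),
      Tendsto (fun m : ℕ =>
          (1 / H (n m)) * ∑ k ∈ Finset.range (n m), (1 / (k + 1 : ℝ)) * f (T^[k] (x m)))
        atTop (𝓝 (∫ y, f y ∂(μ : Measure X)))) :
    IsInvariantMeasure T μ := by
  -- H (n m) tends to infinity
  have hH : Tendsto (fun m => H (n m)) atTop atTop :=
    Real.tendsto_sum_range_one_div_nat_succ_atTop.comp hn.tendsto_atTop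
  have hHpos : ∀ m, (1 : ℝ) ≤ H (n m) := by
    intro m
    have h1 : H 1 ≤ H (n m) := by
      apply Finset.sum_le_sum_of_subset_of_nonneg
      · exact Finset.range_subset_range.2 (hn' m)
      · intro k _ _; positivity
    simpa [H] using h1
  -- Key: ∫ f ∘ T dμ = ∫ f dμ for all continuous f
  have key : ∀ f : C(X, ℝ), ∫ y, f (T y) ∂(μ : Measure X) = ∫ y, f y ∂(μ : Measure X) := by
    intro f
    set g : C(X, ℝ) := f.comp ⟨T, hT⟩ with hg
    obtain ⟨C, hC0, hC⟩ : ∃ C, 0 ≤ C ∧ ∀ y, |f y| ≤ C := by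
      refine ⟨‖BoundedContinuousFunction.mkOfCompact f‖, norm_nonneg _, fun y => ?_⟩
      simpa using BoundedContinuousFunction.norm_coe_le_norm (BoundedContinuousFunction.mkOfCompact f) y
    set a : ℕ → ℝ := fun m =>
      (1 / H (n m)) * ∑ k ∈ Finset.range (n m), (1 / (k + 1 : ℝ)) * f (T^[k] (x m)) with ha
    set b : ℕ → ℝ := fun m =>
      (1 / H (n m)) * ∑ k ∈ Finset.range (n m), (1 / (k + 1 : ℝ)) * g (T^[k] (x m)) with hb
    have hconvf := hconv f
    have hconvg := hconv g
    -- difference tends to zero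
    have hdiff : Tendsto (fun m => b m - a m) atTop (𝓝 0) := by
      apply squeeze_zero_norm (a := fun m => (3 * C) / H (n m))
      · intro m
        have hb_eq : b m - a m = (1 / H (n m)) *
            ∑ k ∈ Finset.range (n m), (1 / (k + 1 : ℝ)) *
              ((fun k => f (T^[k] (x m))) (k + 1) - (fun k => f (T^[k] (x m))) k) := by
          simp only [ha, hb, hg]
          rw [← mul_sub, ← Finset.sum_sub_distrib]
          congr 1
          apply Finset.sum_congr rfl
          intro k _
          simp [ContinuousMap.comp_apply, Function.iterate_succ_apply', mul_sub]
        rw [Real.norm_eq_abs, hb_eq, abs_mul]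
        have hHm : (0 : ℝ) < H (n m) := lt_of_lt_of_le one_pos (hHpos m)
        have hbound := log_avg_diff_bound (fun k => f (T^[k] (x m))) C hC0
          (fun k => hC _) (n m)
        rw [abs_of_pos (by positivity : (0:ℝ) < 1 / H (n m))]
        rw [div_eq_mul_one_div (3 * C) (H (n m)), mul_comm (3 * C)]
        exact mul_le_mul_of_nonneg_left hbound (by positivity)
      · exact Tendsto.div_atTop tendsto_const_nhds hH
    have hb_lim : Tendsto b atTop (𝓝 (∫ y, f y ∂(μ : Measure X))) := by
      have := hconvf.add hdiff
      simpa using this.congr (fun m => by ring)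
    have := tendsto_nhds_unique hconvg hb_lim
    simpa [hg, ContinuousMap.comp_apply] using this
  -- conclude that the pushforward measure equals μ
  have hTmeas : Measurable T := hT.measurable
  have hmap : Measure.map T (μ : Measure X) = (μ : Measure X) := by
    have : IsProbabilityMeasure (Measure.map T (μ : Measure X)) :=
      Measure.isProbabilityMeasure_map hTmeas.aemeasurable
    apply ext_of_forall_lintegral_eq_of_IsFiniteMeasure
    intro f
    have hcont : Continuous fun y => ((f y : ℝ≥0) : ℝ) := NNReal.continuous_coe.comp f.continuous
    have hint1 : Integrable (fun y => ((f y : ℝ≥0) : ℝ)) (μ : Measure X) :=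
      (BoundedContinuousFunction.mkOfCompact ⟨fun y => ((f y : ℝ≥0) : ℝ), hcont⟩).integrable _
    have hint2 : Integrable (fun y => ((f (T y) : ℝ≥0) : ℝ)) (μ : Measure X) :=
      (BoundedContinuousFunction.mkOfCompact ⟨fun y => ((f (T y) : ℝ≥0) : ℝ),
        hcont.comp hT⟩).integrable _
    have hmeas : Measurable fun y => ((f y : ℝ≥0) : ℝ≥0∞) :=
      (ENNReal.continuous_coe.comp (f.continuous)).measurable
    rw [lintegral_map hmeas hTmeas]
    rw [lintegral_coe_eq_integral _ hint2, lintegral_coe_eq_integral _ hint1]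
    congr 1
    exact key ⟨fun y => ((f y : ℝ≥0) : ℝ), hcont⟩
  -- finish
  intro B hB
  have h1 : (μ : Measure X) (T ⁻¹' B) = (μ : Measure X) B := by
    conv_rhs => rw [← hmap]
    rw [Measure.map_apply hTmeas hB]
  simp only [← ENNReal.coe_inj, ProbabilityMeasure.ennreal_coeFn_eq_coeFn_toMeasure]
  exact h1
end

section
/- Let (X,T) be a topological dynamical system. Then (X,T) is uniquely ergodic if and only if for every continuous f : X → ℝ there is a constant c such that the functions x ↦ (1/H_n) ∑_{k=1}^n (1/k) f(T^{k-1}x) converge uniformly on X to c as n → ∞. -/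
/-!
The log-weighted orbit measures `μₙₓ = H_n⁻¹ ∑_{k<n} (k+1)⁻¹ δ_{T^k x}` are asymptotically
invariant uniformly in `x`: since the weights decrease, Abel summation bounds
`∫ g ∘ T dμₙₓ - ∫ g dμₙₓ` by `2‖g‖ / H_n`. Hence every cluster point of `μₙₓ` as `n → ∞`
(with `x` arbitrary) in the compact space of probability measures is invariant
(Krylov–Bogolyubov). If the invariant measure `μ` is unique, then `μₙₓ → μ` uniformly in `x`,
which is the uniform convergence of the averages `∫ f dμₙₓ` to `∫ f dμ`. Conversely, integrating
the averages against an invariant `ν` returns `∫ f dν`, so every invariant measure integrates `f`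
to its uniform limit; an invariant measure exists as a cluster point of `μₙₓ₀`.
The argument works verbatim for any nonincreasing weights with divergent sum.
-/

open Filter MeasureTheory Topology

open BoundedContinuousFunction
open scoped NNReal

theorem abs_sum_mul_sub_le_of_antitone {w a : ℕ → ℝ} (hw : Antitone w) (hw0 : ∀ k, 0 ≤ w k)
    {M : ℝ} (ha : ∀ k, |a k| ≤ M) (n : ℕ) :
    |∑ k ∈ Finset.range n, w k * (a (k + 1) - a k)| ≤ 2 * w 0 * M := by
  have hboundary : ∀ k, |w k * a k| ≤ w k * M := fun k => by
    rw [abs_mul, abs_of_nonneg (hw0 k)]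
    exact mul_le_mul_of_nonneg_left (ha k) (hw0 k)
  -- Abel summation, with the boundary terms `w m * a m` and `w 0 * a 0` moved to the left.
  have abel : ∀ m, |∑ k ∈ Finset.range m, w k * (a (k + 1) - a k) - w m * a m + w 0 * a 0| ≤
      (w 0 - w m) * M := by
    intro m
    induction m with
    | zero => simp
    | succ m ih =>
      have hstep : |(w m - w (m + 1)) * a (m + 1)| ≤ (w m - w (m + 1)) * M := by
        rw [abs_mul, abs_of_nonneg (sub_nonneg.2 (hw m.le_succ))]
        exact mul_le_mul_of_nonneg_left (ha _) (sub_nonneg.2 (hw m.le_succ))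
      rw [Finset.sum_range_succ]
      calc _ = |(∑ k ∈ Finset.range m, w k * (a (k + 1) - a k) - w m * a m + w 0 * a 0) +
              (w m - w (m + 1)) * a (m + 1)| := by ring_nf
        _ ≤ (w 0 - w m) * M + (w m - w (m + 1)) * M :=
          (abs_add_le _ _).trans (add_le_add ih hstep)
        _ = _ := by ring
  calc _ = |(∑ k ∈ Finset.range n, w k * (a (k + 1) - a k) - w n * a n + w 0 * a 0) +
          w n * a n - w 0 * a 0| := by ring_nf
    _ ≤ (w 0 - w n) * M + w n * M + w 0 * M :=
      (abs_sub _ _).trans <| add_le_add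
        ((abs_add_le _ _).trans (add_le_add (abel n) (hboundary n))) (hboundary 0)
    _ = _ := by ring

theorem tendstoUniformly_const_iff_tendsto_uncurry {ι α β : Type*} [UniformSpace β]
    {F : ι → α → β} {c : β} {p : Filter ι} :
    TendstoUniformly F (fun _ => c) p ↔ Tendsto (fun q : ι × α => F q.1 q.2) (p ×ˢ ⊤) (𝓝 c) :=
  tendstoUniformly_iff_tendsto.trans Uniform.tendsto_nhds_right.symm

theorem tendsto_integral_of_tendstoUniformly {α ι E : Type*} [MeasurableSpace α]
    [NormedAddCommGroup E] [NormedSpace ℝ E] {μ : Measure α} [IsFiniteMeasure μ]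
    {l : Filter ι} [l.IsCountablyGenerated] {F : ι → α → E} {f : α → E}
    (hF : ∀ᶠ i in l, AEStronglyMeasurable (F i) μ) (hf : Integrable f μ)
    (h : TendstoUniformly F f l) :
    Tendsto (fun i => ∫ x, F i x ∂μ) l (𝓝 (∫ x, f x ∂μ)) := by
  refine tendsto_integral_filter_of_dominated_convergence (fun x => ‖f x‖ + 1) hF ?_
    (hf.norm.add (integrable_const 1)) (ae_of_all _ h.tendsto_at)
  filter_upwards [Metric.tendstoUniformly_iff.1 h 1 one_pos] with i hi
  refine ae_of_all _ fun x => ?_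
  calc ‖F i x‖ ≤ ‖f x‖ + dist (f x) (F i x) := by
        rw [dist_comm, dist_eq_norm]; exact norm_le_insert' _ _
    _ ≤ ‖f x‖ + 1 := by linarith [hi x]

section Invariance

variable {X : Type*} [TopologicalSpace X] [MeasurableSpace X] [HasOuterApproxClosed X]
  [BorelSpace X] {T : X → X}

theorem map_eq_self_of_forall_integral_comp_eq (hT : Continuous T) {μ : Measure X}
    [IsFiniteMeasure μ] (h : ∀ g : X →ᵇ ℝ, ∫ x, g (T x) ∂μ = ∫ x, g x ∂μ) : μ.map T = μ :=
  ext_of_forall_integral_eq_of_IsFiniteMeasure fun g => by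
    rw [integral_map hT.aemeasurable g.continuous.aestronglyMeasurable, h]

theorem map_eq_self_of_mapClusterPt {ι : Type*} {F : Filter ι} {μs : ι → ProbabilityMeasure X}
    {ν : ProbabilityMeasure X} (hT : Continuous T)
    (hμs : ∀ g : X →ᵇ ℝ, Tendsto (fun i => ∫ x, g (T x) ∂(μs i : Measure X) -
      ∫ x, g x ∂(μs i : Measure X)) F (𝓝 0))
    (hν : MapClusterPt ν F μs) : (ν : Measure X).map T = ν := by
  refine map_eq_self_of_forall_integral_comp_eq hT fun g => sub_eq_zero.1 ?_
  have hdefect : Continuous fun ρ : ProbabilityMeasure X =>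
      ∫ x, g (T x) ∂(ρ : Measure X) - ∫ x, g x ∂(ρ : Measure X) :=
    (ProbabilityMeasure.continuous_integral_boundedContinuousFunction
      (g.compContinuous ⟨T, hT⟩)).sub
      (ProbabilityMeasure.continuous_integral_boundedContinuousFunction g)
  exact eq_of_nhds_neBot
    ((hν.continuousAt_comp hdefect.continuousAt).clusterPt.mono (hμs g)).neBot

end Invariance

section WeightedAverage

variable {X : Type*}

noncomputable def weightedAverage (w : ℕ → ℝ) (T : X → X) (f : X → ℝ) (n : ℕ) (x : X) : ℝ :=
  (∑ k ∈ Finset.range n, w k)⁻¹ * ∑ k ∈ Finset.range n, w k * f (T^[k] x)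

variable {T : X → X}

theorem abs_weightedAverage_comp_sub_le {w : ℕ → ℝ} (hw : Antitone w) (hw0 : ∀ k, 0 ≤ w k)
    {f : X → ℝ} {M : ℝ} (hf : ∀ x, |f x| ≤ M) (n : ℕ) (x : X) :
    |weightedAverage w T (f ∘ T) n x - weightedAverage w T f n x| ≤
      2 * w 0 * M / ∑ k ∈ Finset.range n, w k := by
  have hW : 0 ≤ ∑ k ∈ Finset.range n, w k := Finset.sum_nonneg fun k _ => hw0 k
  have hshift : ∀ k, (f ∘ T) (T^[k] x) = f (T^[k + 1] x) := fun k => by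
    rw [Function.comp_apply, Function.iterate_succ_apply']
  simp only [weightedAverage, hshift, ← mul_sub, ← Finset.sum_sub_distrib]
  rw [abs_mul, abs_inv, abs_of_nonneg hW, div_eq_inv_mul]
  exact mul_le_mul_of_nonneg_left
    (abs_sum_mul_sub_le_of_antitone (a := fun k => f (T^[k] x)) hw hw0 (fun k => hf _) n)
    (inv_nonneg.2 hW)

variable [MeasurableSpace X] {ν : Measure X}

theorem integrable_weightedAverage (hT : MeasurePreserving T ν ν) {f : X → ℝ}
    (hf : Integrable f ν) (w : ℕ → ℝ) (n : ℕ) : Integrable (weightedAverage w T f n) ν :=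
  (integrable_finsetSum _ fun k _ =>
    ((hT.iterate k).integrable_comp_of_integrable hf).const_mul (w k)).const_mul _

theorem integral_weightedAverage (hT : MeasurePreserving T ν ν) {f : X → ℝ}
    (hf : Integrable f ν) {w : ℕ → ℝ} {n : ℕ} (hw : ∑ k ∈ Finset.range n, w k ≠ 0) :
    ∫ x, weightedAverage w T f n x ∂ν = ∫ x, f x ∂ν := by
  have hiter : ∀ k, ∫ x, f (T^[k] x) ∂ν = ∫ x, f x ∂ν := fun k => by
    have hk := hT.iterate k
    rw [← integral_map hk.aemeasurable (by rw [hk.map_eq]; exact hf.aestronglyMeasurable),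
      hk.map_eq]
  simp only [weightedAverage]
  rw [integral_const_mul, integral_finsetSum (f := fun k x => w k * f (T^[k] x)) _ fun k _ =>
    ((hT.iterate k).integrable_comp_of_integrable hf).const_mul (w k)]
  simp only [integral_const_mul, hiter, ← Finset.sum_mul, inv_mul_cancel_left₀ hw]

theorem integral_eq_of_tendstoUniformly_weightedAverage [IsProbabilityMeasure ν]
    (hT : MeasurePreserving T ν ν) {f : X → ℝ} (hf : Integrable f ν) {w : ℕ → ℝ}
    (hw : ∀ᶠ n in atTop, ∑ k ∈ Finset.range n, w k ≠ 0) {c : ℝ}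
    (hc : TendstoUniformly (weightedAverage w T f) (fun _ => c) atTop) :
    ∫ x, f x ∂ν = c := by
  have hlim := tendsto_integral_of_tendstoUniformly
    (Eventually.of_forall fun n => (integrable_weightedAverage hT hf w n).aestronglyMeasurable)
    (integrable_const c) hc
  rw [integral_const, probReal_univ, one_smul] at hlim
  exact tendsto_nhds_unique (tendsto_const_nhds.congr' (hw.mono fun n hn =>
    (integral_weightedAverage hT hf hn).symm)) hlim

end WeightedAverage

section WeightedOrbitMeasure

variable {X : Type*} [MeasurableSpace X]

noncomputable def weightedOrbitMeasure (w : ℕ → ℝ≥0) (T : X → X) (n : ℕ) (x : X) :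
    FiniteMeasure X :=
  ⟨∑ k ∈ Finset.range n, w k • Measure.dirac (T^[k] x), inferInstance⟩

theorem toMeasure_weightedOrbitMeasure (w : ℕ → ℝ≥0) (T : X → X) (n : ℕ) (x : X) :
    (weightedOrbitMeasure w T n x : Measure X) =
      ∑ k ∈ Finset.range n, w k • Measure.dirac (T^[k] x) :=
  rfl

theorem mass_weightedOrbitMeasure (w : ℕ → ℝ≥0) (T : X → X) (n : ℕ) (x : X) :
    (weightedOrbitMeasure w T n x).mass = ∑ k ∈ Finset.range n, w k := by
  apply ENNReal.coe_injective
  rw [FiniteMeasure.ennreal_mass, toMeasure_weightedOrbitMeasure]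
  simp

variable [Nonempty X]

theorem integral_normalize_weightedOrbitMeasure [MeasurableSingletonClass X] {w : ℕ → ℝ≥0}
    {n : ℕ} (hw : ∑ k ∈ Finset.range n, (w k : ℝ) ≠ 0) (T : X → X) (x : X) (f : X → ℝ) :
    ∫ y, f y ∂((weightedOrbitMeasure w T n x).normalize : Measure X) =
      weightedAverage (fun k => w k) T f n x := by
  have hμ : weightedOrbitMeasure w T n x ≠ 0 := by
    rw [← FiniteMeasure.mass_nonzero_iff, mass_weightedOrbitMeasure]
    exact_mod_cast hw
  rw [FiniteMeasure.toMeasure_normalize_eq_of_nonzero _ hμ, integral_smul_nnreal_measure,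
    mass_weightedOrbitMeasure, toMeasure_weightedOrbitMeasure,
    integral_finsetSum_measure fun k _ => (integrable_dirac enorm_lt_top).smul_measure_nnreal]
  simp [weightedAverage, integral_smul_nnreal_measure, integral_dirac, NNReal.smul_def]

theorem tendsto_integral_comp_sub_integral_normalize_weightedOrbitMeasure
    [TopologicalSpace X] [MeasurableSingletonClass X] {w : ℕ → ℝ≥0} (hw : Antitone w)
    (hW : Tendsto (fun n => ∑ k ∈ Finset.range n, (w k : ℝ)) atTop atTop) (T : X → X)
    (g : X →ᵇ ℝ) :
    Tendsto (fun q : ℕ × X =>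
      ∫ y, g (T y) ∂((weightedOrbitMeasure w T q.1 q.2).normalize : Measure X) -
        ∫ y, g y ∂((weightedOrbitMeasure w T q.1 q.2).normalize : Measure X))
      (atTop ×ˢ ⊤) (𝓝 0) := by
  refine squeeze_zero_norm' ?_
    ((tendsto_const_nhds (x := 2 * (w 0 : ℝ) * ‖g‖)).div_atTop (hW.comp tendsto_fst))
  filter_upwards [tendsto_fst.eventually (hW.eventually_gt_atTop 0)] with ⟨n, x⟩ hn
  rw [integral_normalize_weightedOrbitMeasure hn.ne',
    integral_normalize_weightedOrbitMeasure hn.ne', Real.norm_eq_abs]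
  exact abs_weightedAverage_comp_sub_le (fun _ _ h => NNReal.coe_le_coe.2 (hw h))
    (fun k => (w k).2) (fun y => (Real.norm_eq_abs _).symm.trans_le (g.norm_coe_le_norm y)) n x

end WeightedOrbitMeasure

section UniqueErgodicity

variable {X : Type*} [MetricSpace X] [MeasurableSpace X] {T : X → X}

theorem isInvariantMeasure_iff_map_eq (hT : Measurable T) (ν : ProbabilityMeasure X) :
    IsInvariantMeasure T ν ↔ (ν : Measure X).map T = ν := by
  refine ⟨fun h => Measure.ext fun B hB => ?_, fun h B hB => ?_⟩
  · rw [Measure.map_apply hT hB, ← ProbabilityMeasure.ennreal_coeFn_eq_coeFn_toMeasure,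
      ← ProbabilityMeasure.ennreal_coeFn_eq_coeFn_toMeasure, h B hB]
  · rw [← ENNReal.coe_inj, ProbabilityMeasure.ennreal_coeFn_eq_coeFn_toMeasure,
      ProbabilityMeasure.ennreal_coeFn_eq_coeFn_toMeasure, ← Measure.map_apply hT hB, h]

variable [CompactSpace X] [Nonempty X] [BorelSpace X]

theorem uniquelyErgodic_iff_weightedAverage_tendstoUniformly (hT : Continuous T)
    {w : ℕ → ℝ≥0} (hw : Antitone w)
    (hW : Tendsto (fun n => ∑ k ∈ Finset.range n, (w k : ℝ)) atTop atTop) :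
    (∃ μ : ProbabilityMeasure X, {ν : ProbabilityMeasure X | IsInvariantMeasure T ν} = {μ}) ↔
      ∀ f : C(X, ℝ), ∃ c : ℝ,
        TendstoUniformly (weightedAverage (fun k => w k) T f) (fun _ => c) atTop := by
  set μs : ℕ × X → ProbabilityMeasure X := fun q => (weightedOrbitMeasure w T q.1 q.2).normalize
  have hinv : ∀ ν, MapClusterPt ν (atTop ×ˢ ⊤) μs → IsInvariantMeasure T ν := fun ν hν =>
    (isInvariantMeasure_iff_map_eq hT.measurable ν).2 <| map_eq_self_of_mapClusterPt hT
      (tendsto_integral_comp_sub_integral_normalize_weightedOrbitMeasure hw hW T) hν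
  have hW0 : ∀ᶠ n in atTop, ∑ k ∈ Finset.range n, (w k : ℝ) ≠ 0 :=
    (hW.eventually_gt_atTop 0).mono fun _ h => h.ne'
  constructor
  · rintro ⟨μ, hμ⟩ f
    have hlim : Tendsto μs (atTop ×ˢ ⊤) (𝓝 μ) := tendsto_nhds_of_unique_mapClusterPt
      fun ν hν => Set.mem_singleton_iff.1 (hμ ▸ hinv ν hν)
    refine ⟨∫ x, f x ∂(μ : Measure X), tendstoUniformly_const_iff_tendsto_uncurry.2 ?_⟩
    refine (((ProbabilityMeasure.continuous_integral_boundedContinuousFunction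
      (mkOfCompact f)).tendsto μ).comp hlim).congr' ?_
    filter_upwards [tendsto_fst.eventually hW0] with q hq
    exact integral_normalize_weightedOrbitMeasure hq T q.2 f
  · intro hconv
    choose c hc using hconv
    have hint : ∀ ν : ProbabilityMeasure X, IsInvariantMeasure T ν →
        ∀ f : C(X, ℝ), ∫ x, f x ∂(ν : Measure X) = c f := fun ν hν f =>
      integral_eq_of_tendstoUniformly_weightedAverage
        ⟨hT.measurable, (isInvariantMeasure_iff_map_eq hT.measurable ν).1 hν⟩
        ((mkOfCompact f).integrable _) hW0 (hc f)
    obtain ⟨x₀⟩ := ‹Nonempty X›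
    obtain ⟨μ, -, hμ⟩ := isCompact_univ.exists_mapClusterPt (f := atTop)
      (u := fun n => μs (n, x₀)) (le_principal_iff.2 univ_mem)
    have hμinv := hinv μ (hμ.of_comp (tendsto_id.prodMk tendsto_top))
    refine ⟨μ, Set.eq_singleton_iff_unique_mem.2 ⟨hμinv, fun ν hν => ?_⟩⟩
    exact ProbabilityMeasure.toMeasure_injective <| ext_of_forall_integral_eq_of_IsFiniteMeasure
      fun g => (hint ν hν g.toContinuousMap).trans (hint μ hμinv g.toContinuousMap).symm

end UniqueErgodicity

/-- `(X,T)` is uniquely ergodic if and only if for every continuous `f : X → ℝ` there is a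
constant `c` such that the functions `x ↦ (1/H_n) ∑_{k=1}^n (1/k) f(T^{k-1}x)` converge
uniformly on `X` to `c` as `n → ∞`. -/
theorem uniquelyErgodic_iff_log_averages_converge_uniformly
    {X : Type*} [MetricSpace X] [CompactSpace X] [Nonempty X]
    [MeasurableSpace X] [BorelSpace X]
    (T : X → X) (hT : Continuous T) :
    (∃ μ : ProbabilityMeasure X, {ν : ProbabilityMeasure X | IsInvariantMeasure T ν} = {μ}) ↔
    ∀ f : C(X, ℝ), ∃ c : ℝ,
      TendstoUniformly
        (fun (n : ℕ) (x : X) =>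
          (1 / H n) * ∑ k ∈ Finset.range n, (1 / (k + 1 : ℝ)) * f (T^[k] x))
        (fun _ => c) atTop := by
  set w : ℕ → ℝ≥0 := fun k => ((k : ℝ≥0) + 1)⁻¹
  have hw : Antitone w := fun a b hab => inv_anti₀ (by positivity) (by gcongr)
  have hcoe : ∀ k, (w k : ℝ) = 1 / (k + 1) := fun k => by
    simp only [w, NNReal.coe_inv, NNReal.coe_add, NNReal.coe_natCast, NNReal.coe_one, one_div]
  have hW : Tendsto (fun n => ∑ k ∈ Finset.range n, (w k : ℝ)) atTop atTop := by
    simpa only [hcoe] using Real.tendsto_sum_range_one_div_nat_succ_atTop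
  have havg : ∀ f : X → ℝ, weightedAverage (fun k => w k) T f =
      fun n x => (1 / H n) * ∑ k ∈ Finset.range n, (1 / (k + 1 : ℝ)) * f (T^[k] x) := by
    intro f
    funext n x
    simp only [weightedAverage, hcoe, H, one_div]
  simpa only [havg] using uniquelyErgodic_iff_weightedAverage_tendstoUniformly hT hw hW
end

section
/- A topological dynamical system (X,T) is logarithmically mean equicontinuous if and only if it is Weyl logarithmically mean equicontinuous. -/
open Filter

/-- A TDS `(X,T)` is logarithmically mean equicontinuous if for every `ε > 0` there is `δ > 0`
such that `d(x,y) < δ` implies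
`limsup_n (1/H_n) ∑_{k=1}^n (1/k) d(T^{k-1}x, T^{k-1}y) < ε`. -/
def LogMeanEquicontinuous {X : Type*} [MetricSpace X] (T : X → X) : Prop :=
  ∀ ε > (0 : ℝ), ∃ δ > (0 : ℝ), ∀ x y : X, dist x y < δ →
    limsup (fun n : ℕ =>
      (1 / H n) * ∑ k ∈ Finset.range n, (1 / (k + 1 : ℝ)) * dist (T^[k] x) (T^[k] y)) atTop < ε

/-- A TDS `(X,T)` is Weyl logarithmically mean equicontinuous if for every `ε > 0` there is
`δ > 0` such that whenever `d(x,y) < δ`, we have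
`limsup_{n-m→∞} (1/H_{n-m}) ∑_{k=m+1}^n (1/(k-m)) d(T^{k-1}x,T^{k-1}y) < ε`, i.e. there exist
`ε' < ε` and `N` such that the averaged sum is `< ε'` whenever `n - m ≥ N`. -/
def WeylLogMeanEquicontinuous {X : Type*} [MetricSpace X] (T : X → X) : Prop :=
  ∀ ε > (0 : ℝ), ∃ δ > (0 : ℝ), ∀ x y : X, dist x y < δ →
    ∃ ε' < ε, ∃ N : ℕ, ∀ m n : ℕ, m + N ≤ n →
      (1 / H (n - m)) * ∑ j ∈ Finset.range (n - m),
        (1 / (j + 1 : ℝ)) * dist (T^[m + j] x) (T^[m + j] y) < ε'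

open Finset

namespace WeylLogAux

lemma H_nonneg (n : ℕ) : 0 ≤ H n := Finset.sum_nonneg fun k _ => by positivity

lemma H_succ (n : ℕ) : H (n + 1) = H n + 1 / (n + 1) := by
  simp [H, Finset.sum_range_succ]

lemma H_mono : Monotone H := monotone_nat_of_le_succ fun n => by
  rw [H_succ]; have : (0:ℝ) ≤ 1 / (n+1) := by positivity
  linarith

lemma H_pos {n : ℕ} (hn : 1 ≤ n) : 0 < H n := by
  have h1 : H 1 = 1 := by simp [H]
  have := H_mono hn
  rw [h1] at this
  linarith

lemma H_tendsto : Tendsto H atTop atTop := by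
  have := Real.tendsto_sum_range_one_div_nat_succ_atTop
  have he : H = fun n => ∑ i ∈ Finset.range n, (1 / (i + 1) : ℝ) := by
    funext n; simp [H]
  rw [he]; exact this

noncomputable def P (a : ℕ → ℝ) (n : ℕ) : ℝ :=
  ∑ k ∈ Finset.range n, (1 / (k + 1 : ℝ)) * a k

noncomputable def LA (a : ℕ → ℝ) (n : ℕ) : ℝ := (1 / H n) * P a n

noncomputable def F (a : ℕ → ℝ) : ℝ := limsup (LA a) atTop

variable {C : ℝ} {a b c : ℕ → ℝ}

lemma P_nonneg (ha0 : ∀ k, 0 ≤ a k) (n : ℕ) : 0 ≤ P a n :=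
  Finset.sum_nonneg fun k _ => mul_nonneg (by positivity) (ha0 k)

lemma P_le (haC : ∀ k, a k ≤ C) (hC : 0 ≤ C) (n : ℕ) : P a n ≤ C * H n := by
  rw [P, H, Finset.mul_sum]
  refine Finset.sum_le_sum fun k _ => ?_
  have hk : (0:ℝ) < (k:ℝ) + 1 := by positivity
  rw [mul_comm C]
  exact mul_le_mul_of_nonneg_left (haC k) (by positivity)

lemma LA_nonneg (ha0 : ∀ k, 0 ≤ a k) (n : ℕ) : 0 ≤ LA a n :=
  mul_nonneg (by have := H_nonneg n; positivity) (P_nonneg ha0 n)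

lemma LA_le (haC : ∀ k, a k ≤ C) (hC : 0 ≤ C) (n : ℕ) : LA a n ≤ C := by
  rcases Nat.eq_zero_or_pos n with rfl | hn
  · simp [LA, P, hC]
  · have hH := H_pos hn
    rw [LA]
    calc (1 / H n) * P a n ≤ (1 / H n) * (C * H n) :=
          mul_le_mul_of_nonneg_left (P_le haC hC n) (by positivity)
      _ = C := by field_simp

lemma LA_bdd (haC : ∀ k, a k ≤ C) (hC : 0 ≤ C) :
    IsBoundedUnder (· ≤ ·) atTop (LA a) :=
  Filter.isBoundedUnder_of ⟨C, LA_le haC hC⟩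

lemma LA_cobdd (ha0 : ∀ k, 0 ≤ a k) :
    IsCoboundedUnder (· ≤ ·) atTop (LA a) :=
  Filter.isCoboundedUnder_le_of_le atTop (LA_nonneg ha0)

lemma F_nonneg (ha0 : ∀ k, 0 ≤ a k) (haC : ∀ k, a k ≤ C) (hC : 0 ≤ C) : 0 ≤ F a :=
  le_limsup_of_frequently_le (Filter.Frequently.of_forall (LA_nonneg ha0)) (LA_bdd haC hC)

lemma F_le (ha0 : ∀ k, 0 ≤ a k) (haC : ∀ k, a k ≤ C) (hC : 0 ≤ C) : F a ≤ C :=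
  limsup_le_of_le (LA_cobdd ha0) (Filter.Eventually.of_forall (LA_le haC hC))

lemma ev_lt (haC : ∀ k, a k ≤ C) (hC : 0 ≤ C) {γ : ℝ} (hγ : 0 < γ) :
    ∀ᶠ n in atTop, LA a n < F a + γ :=
  eventually_lt_of_limsup_lt (by rw [← F]; linarith [le_refl (F a)]) (LA_bdd haC hC)

lemma F_le_of_ev (ha0 : ∀ k, 0 ≤ a k) {r : ℝ} (h : ∀ᶠ n in atTop, LA a n ≤ r) :
    F a ≤ r :=
  limsup_le_of_le (LA_cobdd ha0) h

lemma le_F_of_ev (haC : ∀ k, a k ≤ C) (hC : 0 ≤ C) {r : ℝ}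
    (h : ∀ᶠ n in atTop, r ≤ LA a n) : r ≤ F a :=
  le_limsup_of_frequently_le h.frequently (LA_bdd haC hC)

/-- Abel summation identity for the logarithmically weighted sums. -/
lemma abel (a : ℕ → ℝ) : ∀ L : ℕ,
    P a L = (∑ n ∈ Finset.range L,
        (∑ j ∈ Finset.range (n + 1), a j) * (1 / ((n + 1 : ℝ) * (n + 2))))
      + (∑ j ∈ Finset.range L, a j) * (1 / (L + 1 : ℝ)) := by
  intro L
  induction L with
  | zero => simp [P]
  | succ L ih =>
    have hP : P a (L + 1) = P a L + (1 / (L + 1 : ℝ)) * a L := by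
      rw [P, P, Finset.sum_range_succ]
    rw [hP, ih, Finset.sum_range_succ, Finset.sum_range_succ a L]
    have h1 : ((L:ℝ) + 1) ≠ 0 := by positivity
    have h2 : ((L:ℝ) + 2) ≠ 0 := by positivity
    push_cast
    field_simp
    ring

/-- telescoping: ∑_{n<L} 1/((n+1)(n+2)) = 1 - 1/(L+1). -/
lemma telescope (L : ℕ) :
    ∑ n ∈ Finset.range L, (1 / ((n + 1 : ℝ) * (n + 2))) = 1 - 1 / (L + 1 : ℝ) := by
  induction L with
  | zero => simp
  | succ L ih =>
    rw [Finset.sum_range_succ, ih]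
    have h1 : ((L:ℝ) + 1) ≠ 0 := by positivity
    have h2 : ((L:ℝ) + 2) ≠ 0 := by positivity
    push_cast
    field_simp
    ring

lemma sum_shift_le (L : ℕ) :
    ∑ n ∈ Finset.range L, (1 / (n + 2 : ℝ)) ≤ H L := by
  rw [H]
  refine Finset.sum_le_sum fun n _ => ?_
  have : (0:ℝ) < (n:ℝ) + 1 := by positivity
  apply one_div_le_one_div_of_le this
  linarith

lemma H_le_sum_shift (L : ℕ) :
    H L - 1 ≤ ∑ n ∈ Finset.range L, (1 / (n + 2 : ℝ)) := by
  have key : H L - ∑ n ∈ Finset.range L, (1 / (n + 2 : ℝ))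
      = ∑ n ∈ Finset.range L, (1 / ((n + 1 : ℝ) * (n + 2))) := by
    rw [H, ← Finset.sum_sub_distrib]
    refine Finset.sum_congr rfl fun n _ => ?_
    have h1 : ((n:ℝ) + 1) ≠ 0 := by positivity
    have h2 : ((n:ℝ) + 2) ≠ 0 := by positivity
    field_simp
    ring
  have h3 := telescope L
  have h4 : (0:ℝ) ≤ 1 / (L + 1 : ℝ) := by positivity
  linarith [key, h3]


/-- Upper bound on `P` from Cesàro window bounds. -/
lemma P_upper {η : ℝ} (hb0 : ∀ k, 0 ≤ b k) (hbC : ∀ k, b k ≤ C) (hC : 0 ≤ C)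
    (hη : 0 ≤ η) {N₁ : ℕ} (hN₁ : 1 ≤ N₁)
    (hkey : ∀ n : ℕ, N₁ ≤ n → ∑ j ∈ Finset.range n, b j ≤ η * n) (L : ℕ) (hL : 1 ≤ L) :
    P b L ≤ η * H L + (2 * C * N₁ + η) := by
  have hS : ∀ n : ℕ, ∑ j ∈ Finset.range (n + 1), b j ≤ η * (n + 1) + C * N₁ := by
    intro n
    rcases le_or_gt N₁ (n + 1) with h | h
    · have := hkey (n + 1) h
      push_cast at this ⊢
      have hCN : (0:ℝ) ≤ C * N₁ := by positivity
      linarith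
    · have h1 : ∑ j ∈ Finset.range (n + 1), b j ≤ (n + 1 : ℝ) * C := by
        calc ∑ j ∈ Finset.range (n + 1), b j ≤ ∑ _j ∈ Finset.range (n + 1), C :=
              Finset.sum_le_sum fun j _ => hbC j
          _ = (n + 1 : ℝ) * C := by
              rw [Finset.sum_const, Finset.card_range, nsmul_eq_mul]; push_cast; ring
      have h2 : ((n:ℝ) + 1) ≤ (N₁ : ℝ) := by exact_mod_cast h.le
      have h3 : (n + 1 : ℝ) * C ≤ (N₁ : ℝ) * C := mul_le_mul_of_nonneg_right h2 hC
      have h4 : (0:ℝ) ≤ η * (n + 1) := by positivity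
      push_cast at h1 h3 ⊢
      nlinarith
  rw [abel b L]
  have hterm : ∀ n ∈ Finset.range L,
      (∑ j ∈ Finset.range (n + 1), b j) * (1 / ((n + 1 : ℝ) * (n + 2)))
        ≤ η * (1 / (n + 2 : ℝ)) + (C * N₁) * (1 / ((n + 1 : ℝ) * (n + 2))) := by
    intro n _
    have hw : (0:ℝ) ≤ 1 / ((n + 1 : ℝ) * (n + 2)) := by positivity
    have := mul_le_mul_of_nonneg_right (hS n) hw
    refine this.trans (le_of_eq ?_)
    have h1 : ((n:ℝ) + 1) ≠ 0 := by positivity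
    have h2 : ((n:ℝ) + 2) ≠ 0 := by positivity
    field_simp
  have hsum1 : ∑ n ∈ Finset.range L,
      (∑ j ∈ Finset.range (n + 1), b j) * (1 / ((n + 1 : ℝ) * (n + 2)))
      ≤ η * H L + C * N₁ := by
    calc ∑ n ∈ Finset.range L,
        (∑ j ∈ Finset.range (n + 1), b j) * (1 / ((n + 1 : ℝ) * (n + 2)))
        ≤ ∑ n ∈ Finset.range L,
          (η * (1 / (n + 2 : ℝ)) + (C * N₁) * (1 / ((n + 1 : ℝ) * (n + 2)))) :=
          Finset.sum_le_sum hterm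
      _ = η * (∑ n ∈ Finset.range L, (1 / (n + 2 : ℝ)))
          + (C * N₁) * (∑ n ∈ Finset.range L, (1 / ((n + 1 : ℝ) * (n + 2)))) := by
          rw [Finset.sum_add_distrib, Finset.mul_sum, Finset.mul_sum]
      _ ≤ η * H L + C * N₁ := by
          have e1 := sum_shift_le L
          have e2 := telescope L
          have e3 : (0:ℝ) ≤ 1 / (L + 1 : ℝ) := by positivity
          have e4 : (0:ℝ) ≤ C * N₁ := by positivity
          have := mul_le_mul_of_nonneg_left e1 hη
          nlinarith [telescope L]
  have hlast : (∑ j ∈ Finset.range L, b j) * (1 / (L + 1 : ℝ)) ≤ η + C * N₁ := by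
    obtain ⟨M, rfl⟩ := Nat.exists_eq_add_of_le hL
    have hSM := hS M
    have hw : (0:ℝ) ≤ 1 / ((M:ℝ) + 1 + 1) := by positivity
    have hMc : ((1 + M : ℕ) : ℝ) = (M : ℝ) + 1 := by push_cast; ring
    have hb : ∑ j ∈ Finset.range (1 + M), b j ≤ η * ((M:ℝ) + 1) + C * N₁ := by
      rw [show 1 + M = M + 1 by ring] at *
      exact hS M
    have h5 : (0:ℝ) < (1 + M : ℕ) + 1 := by positivity
    have h6 : ((1 + M : ℕ):ℝ) + 1 = (M : ℝ) + 2 := by push_cast; ring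
    rw [h6]
    have hw2 : (0:ℝ) ≤ 1 / ((M:ℝ) + 2) := by positivity
    calc (∑ j ∈ Finset.range (1 + M), b j) * (1 / ((M:ℝ) + 2))
        ≤ (η * ((M:ℝ) + 1) + C * N₁) * (1 / ((M:ℝ) + 2)) :=
          mul_le_mul_of_nonneg_right hb hw2
      _ ≤ η + C * N₁ := by
          have hd : (0:ℝ) < (M:ℝ) + 2 := by positivity
          rw [mul_one_div, div_le_iff₀ hd]
          have hCN : (0:ℝ) ≤ C * N₁ := by positivity
          nlinarith
  nlinarith [hsum1, hlast]

/-- Lower bound on `P` from Cesàro lower bounds. -/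
lemma P_lower {η : ℝ} (hb0 : ∀ k, 0 ≤ b k) (hη : 0 ≤ η)
    (hkey : ∀ n : ℕ, 1 ≤ n → η * n ≤ ∑ j ∈ Finset.range n, b j) (L : ℕ) :
    η * (H L - 1) ≤ P b L := by
  rw [abel b L]
  have hterm : ∀ n ∈ Finset.range L,
      η * (1 / (n + 2 : ℝ)) ≤ (∑ j ∈ Finset.range (n + 1), b j) * (1 / ((n + 1 : ℝ) * (n + 2))) := by
    intro n _
    have hw : (0:ℝ) ≤ 1 / ((n + 1 : ℝ) * (n + 2)) := by positivity
    have hk := hkey (n + 1) (by omega)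
    have hc : ((n + 1 : ℕ) : ℝ) = (n : ℝ) + 1 := by push_cast; ring
    rw [hc] at hk
    have := mul_le_mul_of_nonneg_right hk hw
    refine le_trans (le_of_eq ?_) this
    have h1 : ((n:ℝ) + 1) ≠ 0 := by positivity
    have h2 : ((n:ℝ) + 2) ≠ 0 := by positivity
    field_simp
  have hsum : η * (∑ n ∈ Finset.range L, (1 / (n + 2 : ℝ)))
      ≤ ∑ n ∈ Finset.range L,
        (∑ j ∈ Finset.range (n + 1), b j) * (1 / ((n + 1 : ℝ) * (n + 2))) := by
    rw [Finset.mul_sum]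
    exact Finset.sum_le_sum hterm
  have hlast : (0:ℝ) ≤ (∑ j ∈ Finset.range L, b j) * (1 / (L + 1 : ℝ)) := by
    have : (0:ℝ) ≤ ∑ j ∈ Finset.range L, b j := Finset.sum_nonneg fun j _ => hb0 j
    positivity
  have := mul_le_mul_of_nonneg_left (H_le_sum_shift L) hη
  nlinarith


/-- Triangle inequality for `F`. -/
lemma F_triangle (ha0 : ∀ k, 0 ≤ a k) (hab : ∀ k, a k ≤ b k + c k)
    (hbC : ∀ k, b k ≤ C) (hcC : ∀ k, c k ≤ C) (hC : 0 ≤ C) :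
    F a ≤ F b + F c := by
  refine le_of_forall_pos_le_add fun γ hγ => ?_
  have hb := ev_lt hbC hC (half_pos hγ)
  have hc := ev_lt hcC hC (half_pos hγ)
  refine F_le_of_ev ha0 ?_
  filter_upwards [hb, hc] with n h1 h2
  have hP : P a n ≤ P b n + P c n := by
    rw [P, P, P, ← Finset.sum_add_distrib]
    refine Finset.sum_le_sum fun k _ => ?_
    have hw : (0:ℝ) ≤ 1 / ((k:ℝ) + 1) := by positivity
    have := mul_le_mul_of_nonneg_left (hab k) hw
    linarith [this]
  have hH : (0:ℝ) ≤ 1 / H n := by have := H_nonneg n; positivity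
  have h3 : LA a n ≤ LA b n + LA c n := by
    rw [LA, LA, LA, ← mul_add]
    exact mul_le_mul_of_nonneg_left hP hH
  linarith

lemma P_shift_le (ha0 : ∀ k, 0 ≤ a k) (haC : ∀ k, a k ≤ C) (hC : 0 ≤ C) (n : ℕ) :
    P (fun k => a (k + 1)) n ≤ P a (n + 1) + C := by
  have expand : P a (n + 1) = (∑ k ∈ Finset.range n, (1 / ((k:ℝ) + 2)) * a (k + 1)) + a 0 := by
    rw [P, Finset.sum_range_succ' (fun i => (1 / ((i:ℝ) + 1)) * a i) n]
    congr 1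
    · refine Finset.sum_congr rfl fun k _ => ?_
      push_cast
      ring
    · simp
  have hstep : P (fun k => a (k + 1)) n
      ≤ (∑ k ∈ Finset.range n, (1 / ((k:ℝ) + 2)) * a (k + 1))
        + C * ∑ k ∈ Finset.range n, (1 / (((k:ℝ) + 1) * ((k:ℝ) + 2))) := by
    rw [P, Finset.mul_sum, ← Finset.sum_add_distrib]
    refine Finset.sum_le_sum fun k _ => ?_
    have h1 : ((k:ℝ) + 1) ≠ 0 := by positivity
    have h2 : ((k:ℝ) + 2) ≠ 0 := by positivity
    have hterm : (1 / ((k:ℝ) + 1)) * a (k + 1)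
        = (1 / ((k:ℝ) + 2)) * a (k + 1) + (1 / (((k:ℝ) + 1) * ((k:ℝ) + 2))) * a (k + 1) := by
      field_simp
      ring
    rw [hterm]
    have hw : (0:ℝ) ≤ 1 / (((k:ℝ) + 1) * ((k:ℝ) + 2)) := by positivity
    have := mul_le_mul_of_nonneg_left (haC (k + 1)) hw
    linarith [this]
  have htel := telescope n
  have h0 := ha0 0
  have hinv : (0:ℝ) ≤ 1 / ((n:ℝ) + 1) := by positivity
  nlinarith [hstep, expand]

/-- `F` does not increase under shifting the sequence. -/
lemma F_shift (ha0 : ∀ k, 0 ≤ a k) (haC : ∀ k, a k ≤ C) (hC : 0 ≤ C) :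
    F (fun k => a (k + 1)) ≤ F a := by
  refine le_of_forall_pos_le_add fun γ hγ => ?_
  set γ' : ℝ := min (γ / 2) 1 with hγ'def
  have hγ'pos : 0 < γ' := lt_min (half_pos hγ) one_pos
  have hγ'le : γ' ≤ γ / 2 := min_le_left _ _
  have hγ'1 : γ' ≤ 1 := min_le_right _ _
  have hF0 : 0 ≤ F a := F_nonneg ha0 haC hC
  have hFC : F a ≤ C := F_le ha0 haC hC
  have hev1 : ∀ᶠ n in atTop, LA a (n + 1) < F a + γ' := by
    obtain ⟨N, hN⟩ := eventually_atTop.1 (ev_lt haC hC hγ'pos)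
    exact eventually_atTop.2 ⟨N, fun n hn => hN (n + 1) (le_trans hn (Nat.le_succ n))⟩
  have hev2 : ∀ᶠ n in atTop, (2 * C + 1) / γ' ≤ H n := H_tendsto.eventually_ge_atTop _
  have hev3 : ∀ᶠ n in atTop, 1 ≤ n := eventually_ge_atTop 1
  have hevfin : ∀ᶠ n in atTop, LA (fun k => a (k + 1)) n ≤ F a + γ' + γ' := by
    filter_upwards [hev1, hev2, hev3] with n h1 h2 h3
    have hHpos : 0 < H n := H_pos h3
    have hH1pos : 0 < H (n + 1) := H_pos (by omega)
    have hs : P a (n + 1) < (F a + γ') * H (n + 1) := by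
      have := h1
      rw [LA] at this
      have h4 := mul_lt_mul_of_pos_left this hH1pos
      rw [← mul_assoc, mul_one_div, div_self (ne_of_gt hH1pos), one_mul] at h4
      linarith [h4]
    have hHs : H (n + 1) = H n + 1 / ((n:ℝ) + 1) := H_succ n
    have hfrac : (F a + γ') * (1 / ((n:ℝ) + 1)) ≤ C + 1 := by
      have hle : 1 / ((n:ℝ) + 1) ≤ 1 := by
        rw [div_le_one (by positivity)]
        have : (0:ℝ) ≤ (n:ℝ) := Nat.cast_nonneg n
        linarith
      have hF1 : F a + γ' ≤ C + 1 := by linarith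
      have h0' : (0:ℝ) ≤ F a + γ' := by linarith
      calc (F a + γ') * (1 / ((n:ℝ) + 1)) ≤ (F a + γ') * 1 :=
            mul_le_mul_of_nonneg_left hle h0'
        _ ≤ C + 1 := by linarith
    have hPb : P (fun k => a (k + 1)) n ≤ (F a + γ') * H n + (2 * C + 1) := by
      have := P_shift_le ha0 haC hC n
      rw [hHs] at hs
      nlinarith
    have : LA (fun k => a (k + 1)) n ≤ (F a + γ') + (2 * C + 1) * (1 / H n) := by
      rw [LA]
      have h5 : (0:ℝ) ≤ 1 / H n := by positivity
      calc (1 / H n) * P (fun k => a (k + 1)) n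
          ≤ (1 / H n) * ((F a + γ') * H n + (2 * C + 1)) :=
            mul_le_mul_of_nonneg_left hPb h5
        _ = (F a + γ') + (2 * C + 1) * (1 / H n) := by
            field_simp
    have hlast : (2 * C + 1) * (1 / H n) ≤ γ' := by
      rw [mul_one_div]
      rw [div_le_iff₀ hHpos]
      rw [div_le_iff₀ hγ'pos] at h2
      nlinarith
    linarith
  have hle := F_le_of_ev (a := fun k => a (k + 1)) (fun k => ha0 (k + 1)) hevfin
  linarith


/-- Rising sun lemma: inside a window with large average one can find a position from
which all initial averages (up to a proportional length) are large. -/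
lemma rising (a : ℕ → ℝ) (ha0 : ∀ k, 0 ≤ a k) (haC : ∀ k, a k ≤ C) (hC : 0 < C)
    {η : ℝ} (hη : 0 < η) (m L : ℕ)
    (hbig : 2 * η * L ≤ ∑ j ∈ Finset.range L, a (m + j)) :
    ∃ p R : ℕ, (η / C) * L ≤ (R : ℝ) ∧ ∀ n : ℕ, 1 ≤ n → n ≤ R →
      η * n ≤ ∑ j ∈ Finset.range n, a (p + j) := by
  set g : ℕ → ℝ := fun t => (∑ j ∈ Finset.range t, a (m + j)) - η * t with hg_def
  obtain ⟨t0, ht0mem, ht0min⟩ :=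
    Finset.exists_min_image (Finset.range (L + 1)) g ⟨0, by simp⟩
  have ht0L : t0 ≤ L := by
    have := Finset.mem_range.1 ht0mem
    omega
  refine ⟨m + t0, L - t0, ?_, ?_⟩
  · -- length bound
    have hsplit : ∑ j ∈ Finset.range L, a (m + j)
        = (∑ j ∈ Finset.range t0, a (m + j))
          + ∑ j ∈ Finset.range (L - t0), a (m + t0 + j) := by
      have := Finset.sum_range_add (fun j => a (m + j)) t0 (L - t0)
      rw [show t0 + (L - t0) = L by omega] at this
      rw [this]
      congr 1
      exact Finset.sum_congr rfl fun j _ => by rw [Nat.add_assoc]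
    have hgt0 : g t0 ≤ g 0 := ht0min 0 (Finset.mem_range.2 (by omega))
    have hg0 : g 0 = 0 := by simp [hg_def]
    have hsumC : ∑ j ∈ Finset.range (L - t0), a (m + t0 + j) ≤ C * (L - t0 : ℕ) := by
      calc ∑ j ∈ Finset.range (L - t0), a (m + t0 + j)
          ≤ ∑ _j ∈ Finset.range (L - t0), C := Finset.sum_le_sum fun j _ => haC _
        _ = C * (L - t0 : ℕ) := by
            rw [Finset.sum_const, Finset.card_range, nsmul_eq_mul]; ring
    have hgL : η * L ≤ g L := by
      rw [hg_def]
      simp only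
      linarith
    have hcast : ((L - t0 : ℕ) : ℝ) = (L : ℝ) - (t0 : ℝ) := by
      push_cast [Nat.cast_sub ht0L]
      ring
    have hgdiff : g L - g t0 ≤ C * ((L - t0 : ℕ) : ℝ) := by
      rw [hg_def]
      simp only
      rw [hsplit]
      have : η * (t0 : ℝ) + η * ((L - t0 : ℕ):ℝ) = η * (L : ℝ) := by
        rw [hcast]; ring
      nlinarith [hsumC]
    have hgt00 : g t0 ≤ 0 := le_trans hgt0 (le_of_eq hg0)
    have hfinal : η * L ≤ C * ((L - t0 : ℕ) : ℝ) := by linarith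
    rw [div_mul_eq_mul_div, div_le_iff₀ hC]
    calc η * (L : ℝ) ≤ C * ((L - t0 : ℕ) : ℝ) := hfinal
      _ = ((L - t0 : ℕ) : ℝ) * C := by ring
  · -- good initial averages
    intro n hn1 hnR
    have hmem : t0 + n ∈ Finset.range (L + 1) := Finset.mem_range.2 (by omega)
    have hgmin := ht0min (t0 + n) hmem
    have hsplit : ∑ j ∈ Finset.range (t0 + n), a (m + j)
        = (∑ j ∈ Finset.range t0, a (m + j))
          + ∑ j ∈ Finset.range n, a (m + t0 + j) := by
      rw [Finset.sum_range_add (fun j => a (m + j)) t0 n]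
      congr 1
      exact Finset.sum_congr rfl fun j _ => by rw [Nat.add_assoc]
    rw [hg_def] at hgmin
    simp only at hgmin
    rw [hsplit] at hgmin
    have hcast : ((t0 + n : ℕ) : ℝ) = (t0 : ℝ) + (n : ℝ) := by push_cast; ring
    rw [hcast] at hgmin
    linarith

section PointLemmas

variable {X : Type*} [MetricSpace X] (T : X → X)

lemma F_pair_shift (hdist : ∀ p q : X, dist p q ≤ C) (hC : 0 ≤ C) (u v : X) :
    F (fun k => dist (T^[k] (T u)) (T^[k] (T v)))
      ≤ F (fun k => dist (T^[k] u) (T^[k] v)) := by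
  have hfe : (fun k => dist (T^[k] (T u)) (T^[k] (T v)))
      = fun k => dist (T^[k + 1] u) (T^[k + 1] v) := by
    funext k
    rw [Function.iterate_succ_apply, Function.iterate_succ_apply]
  rw [hfe]
  exact F_shift (a := fun k => dist (T^[k] u) (T^[k] v))
    (fun k => dist_nonneg) (fun k => hdist _ _) hC

lemma F_pair_iterate (hdist : ∀ p q : X, dist p q ≤ C) (hC : 0 ≤ C) :
    ∀ (m : ℕ) (u v : X),
      F (fun k => dist (T^[k] (T^[m] u)) (T^[k] (T^[m] v)))
        ≤ F (fun k => dist (T^[k] u) (T^[k] v)) := by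
  intro m
  induction m with
  | zero => intro u v; simp
  | succ m ih =>
    intro u v
    have h1 : T^[m + 1] u = T^[m] (T u) := Function.iterate_succ_apply T m u
    have h2 : T^[m + 1] v = T^[m] (T v) := Function.iterate_succ_apply T m v
    rw [h1, h2]
    exact le_trans (ih (T u) (T v)) (F_pair_shift T hdist hC u v)

end PointLemmas

end WeylLogAux

open WeylLogAux in
/-- A topological dynamical system is logarithmically mean equicontinuous if and only if it is
Weyl logarithmically mean equicontinuous. -/
theorem logMeanEquicontinuous_iff_weylLogMeanEquicontinuous
    {X : Type*} [MetricSpace X] [CompactSpace X] [Nonempty X]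
    (T : X → X) (hT : Continuous T) :
    LogMeanEquicontinuous T ↔ WeylLogMeanEquicontinuous T := by
  -- a uniform bound on distances
  obtain ⟨C0, hC0⟩ := Metric.isBounded_iff.1 (isCompact_univ : IsCompact (Set.univ : Set X)).isBounded
  obtain ⟨x0⟩ := (inferInstance : Nonempty X)
  have hC00 : (0:ℝ) ≤ C0 := le_trans dist_nonneg (hC0 (Set.mem_univ x0) (Set.mem_univ x0))
  set C : ℝ := C0 + 1 with hC_def
  have hCpos : (0:ℝ) < C := by rw [hC_def]; linarith
  have hdist : ∀ p q : X, dist p q ≤ C := fun p q =>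
    le_trans (hC0 (Set.mem_univ p) (Set.mem_univ q)) (by rw [hC_def]; linarith)
  constructor
  · -- hard direction
    intro hLME ε hε
    obtain ⟨δ, hδpos, hδ⟩ := hLME (ε / 32) (by positivity)
    have hδ' : ∀ u v : X, dist u v < δ → F (fun k => dist (T^[k] u) (T^[k] v)) < ε / 32 := by
      intro u v huv
      exact hδ u v huv
    refine ⟨δ, hδpos, fun x y hxy => ?_⟩
    have hFxy : F (fun k => dist (T^[k] x) (T^[k] y)) < ε / 32 := hδ' x y hxy
    -- Step 1: uniform Cesàro window bound
    have key : ∃ N₁ : ℕ, 1 ≤ N₁ ∧ ∀ m L : ℕ, N₁ ≤ L →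
        ∑ j ∈ Finset.range L, dist (T^[m + j] x) (T^[m + j] y) < ε / 2 * L := by
      by_contra hcon
      push_neg at hcon
      have hcon' : ∀ i : ℕ, ∃ m L : ℕ, i + 1 ≤ L ∧
          ε / 2 * L ≤ ∑ j ∈ Finset.range L, dist (T^[m + j] x) (T^[m + j] y) :=
        fun i => by
          obtain ⟨m, L, h1, h2⟩ := hcon (i + 1) (by omega)
          exact ⟨m, L, h1, h2⟩
      choose mseq Lseq hLs hsum using hcon'
      set a : ℕ → ℝ := fun k => dist (T^[k] x) (T^[k] y) with ha_def
      have ha0 : ∀ k, 0 ≤ a k := fun k => dist_nonneg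
      have haC : ∀ k, a k ≤ C := fun k => hdist _ _
      have hrise : ∀ i : ℕ, ∃ p R : ℕ, ((ε / 4) / C) * (Lseq i) ≤ (R : ℝ) ∧
          ∀ n : ℕ, 1 ≤ n → n ≤ R → (ε / 4) * n ≤ ∑ j ∈ Finset.range n, a (p + j) := by
        intro i
        refine rising a ha0 haC hCpos (by positivity) (mseq i) (Lseq i) ?_
        have := hsum i
        have he : 2 * (ε / 4) = ε / 2 := by ring
        rw [he]
        calc ε / 2 * (Lseq i : ℝ) ≤ ∑ j ∈ Finset.range (Lseq i), dist (T^[mseq i + j] x) (T^[mseq i + j] y) := this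
          _ = ∑ j ∈ Finset.range (Lseq i), a (mseq i + j) := rfl
      choose pseq Rseq hR hgood using hrise
      -- a convergent subsequence of the shifted orbit pairs
      obtain ⟨w, -, φ, hφmono, hconv⟩ :=
        (isCompact_univ : IsCompact (Set.univ : Set (X × X))).tendsto_subseq
          (x := fun i => ((T^[pseq i] x, T^[pseq i] y) : X × X)) (fun i => Set.mem_univ _)
      have hu : Filter.Tendsto (fun i => T^[pseq (φ i)] x) Filter.atTop (nhds w.1) :=
        (continuous_fst.tendsto w).comp hconv
      have hv : Filter.Tendsto (fun i => T^[pseq (φ i)] y) Filter.atTop (nhds w.2) :=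
        (continuous_snd.tendsto w).comp hconv
      -- R along the subsequence tends to infinity
      have hRtend : Filter.Tendsto (fun i => (Rseq (φ i) : ℝ)) Filter.atTop Filter.atTop := by
        have hc : (0:ℝ) < (ε / 4) / C := by positivity
        have hbase : Filter.Tendsto (fun i : ℕ => ((ε / 4) / C) * ((i : ℝ) + 1))
            Filter.atTop Filter.atTop := by
          apply Filter.Tendsto.const_mul_atTop hc
          exact Filter.tendsto_atTop_add_const_right _ 1 tendsto_natCast_atTop_atTop
        apply Filter.tendsto_atTop_mono _ hbase
        intro i
        have h1 : (i : ℝ) + 1 ≤ (Lseq (φ i) : ℝ) := by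
          have h2 : i + 1 ≤ φ i + 1 := by
            have : i ≤ φ i := hφmono.le_apply
            omega
          have h3 : φ i + 1 ≤ Lseq (φ i) := hLs (φ i)
          exact_mod_cast le_trans h2 h3
        calc ((ε / 4) / C) * ((i : ℝ) + 1) ≤ ((ε / 4) / C) * (Lseq (φ i) : ℝ) :=
              mul_le_mul_of_nonneg_left h1 (le_of_lt hc)
          _ ≤ (Rseq (φ i) : ℝ) := hR (φ i)
      -- the limit pair has all Cesàro averages at least ε/4
      set b : ℕ → ℝ := fun k => dist (T^[k] w.1) (T^[k] w.2) with hb_def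
      have hb0 : ∀ k, 0 ≤ b k := fun k => dist_nonneg
      have hbC : ∀ k, b k ≤ C := fun k => hdist _ _
      have hlow : ∀ n : ℕ, 1 ≤ n → ε / 4 * n ≤ ∑ j ∈ Finset.range n, b j := by
        intro n hn1
        have hsums : Filter.Tendsto
            (fun i => ∑ j ∈ Finset.range n,
              dist (T^[j] (T^[pseq (φ i)] x)) (T^[j] (T^[pseq (φ i)] y)))
            Filter.atTop (nhds (∑ j ∈ Finset.range n, dist (T^[j] w.1) (T^[j] w.2))) := by
          apply tendsto_finset_sum
          intro j _
          exact (((hT.iterate j).tendsto w.1).comp hu).dist (((hT.iterate j).tendsto w.2).comp hv)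
        refine ge_of_tendsto hsums ?_
        have hevR : ∀ᶠ i in Filter.atTop, (n : ℝ) ≤ (Rseq (φ i) : ℝ) :=
          hRtend.eventually_ge_atTop _
        filter_upwards [hevR] with i hiR
        have hnR : n ≤ Rseq (φ i) := by exact_mod_cast hiR
        have hsum_eq : ∑ j ∈ Finset.range n,
            dist (T^[j] (T^[pseq (φ i)] x)) (T^[j] (T^[pseq (φ i)] y))
            = ∑ j ∈ Finset.range n, a (pseq (φ i) + j) := by
          refine Finset.sum_congr rfl fun j _ => ?_
          rw [ha_def]
          simp only
          rw [Nat.add_comm (pseq (φ i)) j, Function.iterate_add_apply, Function.iterate_add_apply]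
        rw [hsum_eq]
        exact hgood (φ i) n hn1 hnR
      -- hence F at the limit pair is at least ε/4
      have hFlow : ε / 4 ≤ F b := by
        refine le_of_forall_pos_le_add fun γ hγ => ?_
        have hev1 : ∀ᶠ L in Filter.atTop, (ε / 4) / γ ≤ H L := H_tendsto.eventually_ge_atTop _
        have hev2 : ∀ᶠ L in Filter.atTop, 1 ≤ L := Filter.eventually_ge_atTop 1
        have hev : ∀ᶠ L in Filter.atTop, ε / 4 - γ ≤ LA b L := by
          filter_upwards [hev1, hev2] with L h1 h2
          have hHpos : 0 < H L := H_pos h2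
          have hPlow := P_lower hb0 (by positivity : (0:ℝ) ≤ ε / 4) hlow L
          have hLA : LA b L = (1 / H L) * P b L := rfl
          have hgap : (ε / 4) * (1 / H L) ≤ γ := by
            rw [mul_one_div, div_le_iff₀ hHpos]
            rw [div_le_iff₀ hγ] at h1
            nlinarith
          have h5 : (0:ℝ) ≤ 1 / H L := by positivity
          have h6 : (1 / H L) * ((ε / 4) * (H L - 1)) ≤ (1 / H L) * P b L :=
            mul_le_mul_of_nonneg_left hPlow h5
          have h7 : (1 / H L) * ((ε / 4) * (H L - 1))
              = ε / 4 - (ε / 4) * (1 / H L) := by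
            field_simp
          rw [hLA]
          linarith [h6, h7 ▸ h6]
        have := le_F_of_ev hbC (le_of_lt hCpos) hev
        linarith
      -- but F at the limit pair is small: choose a good index
      have hevu : ∀ᶠ i in Filter.atTop, dist (T^[pseq (φ i)] x) w.1 < δ := by
        have := hu.eventually (Metric.ball_mem_nhds w.1 hδpos)
        filter_upwards [this] with i hi
        exact Metric.mem_ball.1 hi
      have hevv : ∀ᶠ i in Filter.atTop, dist (T^[pseq (φ i)] y) w.2 < δ := by
        have := hv.eventually (Metric.ball_mem_nhds w.2 hδpos)
        filter_upwards [this] with i hi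
        exact Metric.mem_ball.1 hi
      obtain ⟨i, hi1, hi2⟩ := (hevu.and hevv).exists
      set p : ℕ := pseq (φ i) with hp_def
      have hF1 : F (fun k => dist (T^[k] w.1) (T^[k] (T^[p] x))) < ε / 32 := by
        apply hδ' w.1 (T^[p] x)
        rw [dist_comm]
        exact hi1
      have hF3 : F (fun k => dist (T^[k] (T^[p] y)) (T^[k] w.2)) < ε / 32 :=
        hδ' (T^[p] y) w.2 hi2
      have hF2 : F (fun k => dist (T^[k] (T^[p] x)) (T^[k] (T^[p] y))) < ε / 32 :=
        lt_of_le_of_lt (F_pair_iterate T hdist (le_of_lt hCpos) p x y) hFxy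
      have htri1 : F (fun k => dist (T^[k] (T^[p] x)) (T^[k] w.2))
          ≤ F (fun k => dist (T^[k] (T^[p] x)) (T^[k] (T^[p] y)))
            + F (fun k => dist (T^[k] (T^[p] y)) (T^[k] w.2)) :=
        F_triangle (fun k => dist_nonneg) (fun k => dist_triangle _ _ _)
          (fun k => hdist _ _) (fun k => hdist _ _) (le_of_lt hCpos)
      have htri2 : F b
          ≤ F (fun k => dist (T^[k] w.1) (T^[k] (T^[p] x)))
            + F (fun k => dist (T^[k] (T^[p] x)) (T^[k] w.2)) :=
        F_triangle (fun k => dist_nonneg) (fun k => dist_triangle _ _ _)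
          (fun k => hdist _ _) (fun k => hdist _ _) (le_of_lt hCpos)
      linarith
    -- Step 2: conclude the Weyl bound
    obtain ⟨N₁, hN₁, hkey⟩ := key
    obtain ⟨N₂, hN₂⟩ := Filter.eventually_atTop.1
      (H_tendsto.eventually_ge_atTop (4 * (2 * C * N₁ + ε / 2) / ε + 1))
    refine ⟨3 * ε / 4, by linarith, max N₂ 1, fun m n hmn => ?_⟩
    set L : ℕ := n - m with hL_def
    have hL1 : 1 ≤ L := by omega
    have hLN₂ : N₂ ≤ L := by omega
    set b : ℕ → ℝ := fun j => dist (T^[m + j] x) (T^[m + j] y) with hb_def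
    have hb0 : ∀ k, 0 ≤ b k := fun k => dist_nonneg
    have hbC : ∀ k, b k ≤ C := fun k => hdist _ _
    have hkeyb : ∀ nn : ℕ, N₁ ≤ nn → ∑ j ∈ Finset.range nn, b j ≤ ε / 2 * nn :=
      fun nn hnn => (hkey m nn hnn).le
    have hupper := P_upper hb0 hbC (le_of_lt hCpos) (by positivity : (0:ℝ) ≤ ε / 2)
      hN₁ hkeyb L hL1
    have hHpos : 0 < H L := H_pos hL1
    have hHL : 4 * (2 * C * N₁ + ε / 2) / ε + 1 ≤ H L := hN₂ L hLN₂
    have hKnn : (0:ℝ) ≤ 2 * C * N₁ := by positivity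
    have hmul : ε * (4 * (2 * C * N₁ + ε / 2) / ε + 1)
        = 4 * (2 * C * N₁ + ε / 2) + ε := by
      field_simp
    have hεH : 4 * (2 * C * N₁ + ε / 2) + ε ≤ ε * H L := by
      have := mul_le_mul_of_nonneg_left hHL (le_of_lt hε)
      rw [hmul] at this
      exact this
    have hPlt : P b L < 3 * ε / 4 * H L := by nlinarith
    show (1 / H L) * P b L < 3 * ε / 4
    calc (1 / H L) * P b L < (1 / H L) * (3 * ε / 4 * H L) :=
          mul_lt_mul_of_pos_left hPlt (by positivity)
      _ = 3 * ε / 4 := by field_simp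
  · -- easy direction
    intro hW ε hε
    obtain ⟨δ, hδpos, hδ⟩ := hW ε hε
    refine ⟨δ, hδpos, fun x y hxy => ?_⟩
    obtain ⟨ε', hε', N, hN⟩ := hδ x y hxy
    have hcb : IsCoboundedUnder (· ≤ ·) atTop
        (fun n : ℕ => (1 / H n) * ∑ k ∈ Finset.range n, (1 / (k + 1 : ℝ)) * dist (T^[k] x) (T^[k] y)) := by
      apply Filter.isCoboundedUnder_le_of_le atTop (x := 0)
      intro n
      have h1 : (0:ℝ) ≤ 1 / H n := by have := H_nonneg n; positivity
      have h2 : (0:ℝ) ≤ ∑ k ∈ Finset.range n, (1 / (k + 1 : ℝ)) * dist (T^[k] x) (T^[k] y) :=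
        Finset.sum_nonneg fun k _ => mul_nonneg (by positivity) dist_nonneg
      positivity
    have hev : ∀ᶠ n in atTop,
        (1 / H n) * ∑ k ∈ Finset.range n, (1 / (k + 1 : ℝ)) * dist (T^[k] x) (T^[k] y) ≤ ε' := by
      refine eventually_atTop.2 ⟨N, fun n hn => ?_⟩
      have := hN 0 n (by omega)
      simpa using this.le
    exact lt_of_le_of_lt (limsup_le_of_le hcb hev) hε'
end
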